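/- arXiv:1609.08172 — 2 statements merged into one kernel-verified Lean document; each statement's English description precedes it below -/
import Mathlib

section
/- Let n ≥ 1, d = 2^n, and define α_+(ψ) := tr(P_{n,4}·(|ψ⟩⟨ψ|)^{⊗4}) and ε(ψ) := (d(d+3)/4)·α_+(ψ) − 1 for unit vectors ψ ∈ ℂ^d. Then for all unit vectors ψ, φ ∈ ℂ^d: |α_+(ψ) − α_+(φ)| ≤ (5.4/d)·‖ψ − φ‖₂ and |ε(ψ) − ε(φ)| ≤ (5.4(d+3)/4)·‖ψ − φ‖₂; that is, α_+ and ε are Lipschitz continuous on the unit sphere with Lipschitz constants 5.4/d and 5.4(d+3)/4 respectively. -/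
open scoped BigOperators

noncomputable section

/-- `t`-fold tensor (Kronecker) power of a matrix, acting on `(ℂ^α)^{⊗t}`. -/
def tpow {α : Type*} [Fintype α] (M : Matrix α α ℂ) (t : ℕ) :
    Matrix (Fin t → α) (Fin t → α) ℂ :=
  Matrix.of fun x y => ∏ i, M (x i) (y i)

/-- The rank-one operator `|ψ⟩⟨ψ|`. -/
def rankOne {α : Type*} (ψ : α → ℂ) : Matrix α α ℂ :=
  Matrix.of fun i j => ψ i * (starRingEnd ℂ) (ψ j)

/-- The operator `U_σ` permuting the `t` tensor factors of `(ℂ^α)^{⊗t}`. -/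
def permOp (α : Type*) [DecidableEq α] {t : ℕ} (σ : Equiv.Perm (Fin t)) :
    Matrix (Fin t → α) (Fin t → α) ℂ :=
  Matrix.of fun x y => if (fun k => x (σ k)) = y then 1 else 0

/-- The projector `P_[t]` onto the symmetric subspace `Sym_t(ℂ^α)`. -/
def symProj (α : Type*) [DecidableEq α] (t : ℕ) :
    Matrix (Fin t → α) (Fin t → α) ℂ :=
  (t.factorial : ℂ)⁻¹ • ∑ σ : Equiv.Perm (Fin t), permOp α σ

/-- Single-qubit Pauli matrices labelled by `𝔽₂²`:
`σ_{(0,0)} = I`, `σ_{(0,1)} = X`, `σ_{(1,0)} = Z`, `σ_{(1,1)} = Y`. -/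
def pauli (a : ZMod 2 × ZMod 2) : Matrix (ZMod 2) (ZMod 2) ℂ :=
  Matrix.of fun x y =>
    if a = (0, 0) then (if x = y then 1 else 0)
    else if a = (0, 1) then (if x = y + 1 then 1 else 0)
    else if a = (1, 0) then (if x = y then (if x = 0 then 1 else -1) else 0)
    else (if x = y + 1 then (if x = 0 then -Complex.I else Complex.I) else 0)

/-- The Pauli operator `W_a`, `a ∈ 𝔽₂^{2n}`, on qubits labelled by a finite type `Q`. -/
def PauliW {Q : Type*} [Fintype Q] (a : Q → ZMod 2 × ZMod 2) :
    Matrix (Q → ZMod 2) (Q → ZMod 2) ℂ :=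
  Matrix.of fun x y => ∏ i, pauli (a i) (x i) (y i)

/-- The stabilizer projector `P_{n,k} = 2^{-2n}·Σ_{a∈𝔽₂^{2n}} W_a^{⊗k}`. -/
def stabProj (n k : ℕ) :
    Matrix (Fin k → (Fin n → ZMod 2)) (Fin k → (Fin n → ZMod 2)) ℂ :=
  ((2 : ℂ) ^ (2 * n))⁻¹ • ∑ a : Fin n → ZMod 2 × ZMod 2, tpow (PauliW a) k

/-- A single-qubit gate `G` applied to qubit `i` of `n` qubits (identity elsewhere). -/
def embedGate (n : ℕ) (G : Matrix (ZMod 2) (ZMod 2) ℂ) (i : Fin n) :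
    Matrix (Fin n → ZMod 2) (Fin n → ZMod 2) ℂ :=
  Matrix.of fun x y =>
    G (x i) (y i) * ∏ k ∈ Finset.univ.erase i, (if x k = y k then (1 : ℂ) else 0)

/-- The Hadamard gate `((1+i)/2)·[[1,1],[1,−1]]`. -/
def hGate : Matrix (ZMod 2) (ZMod 2) ℂ :=
  Matrix.of fun x y => (1 + Complex.I) / 2 * (if x = 1 ∧ y = 1 then -1 else 1)

/-- The phase gate `diag(1, −i)`. -/
def sGate : Matrix (ZMod 2) (ZMod 2) ℂ :=
  Matrix.of fun x y => if x = y then (if x = 0 then 1 else -Complex.I) else 0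

/-- The CNOT gate with control qubit `i` and target qubit `j`. -/
def cnotGate (n : ℕ) (i j : Fin n) :
    Matrix (Fin n → ZMod 2) (Fin n → ZMod 2) ℂ :=
  Matrix.of fun x y =>
    if x i = y i ∧ x j = y i + y j ∧ ∀ k, k ≠ i → k ≠ j → x k = y k then 1 else 0

/-- Generators of the `n`-qubit Clifford group: Hadamard and phase gates on each qubit,
CNOT gates on each ordered pair of distinct qubits. -/
def cliffordGens (n : ℕ) : Set (Matrix (Fin n → ZMod 2) (Fin n → ZMod 2) ℂ) :=
  (⋃ i : Fin n, {embedGate n hGate i}) ∪ (⋃ i : Fin n, {embedGate n sGate i}) ∪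
    ⋃ (i : Fin n) (j : Fin n) (_ : i ≠ j), {cnotGate n i j}

/-- The `n`-qubit Clifford group: the subgroup of the unitary group `U(2^n)` generated by
the Hadamard and phase gates on each qubit together with the CNOT gates. -/
def CliffordGroup (n : ℕ) : Subgroup (Matrix.unitaryGroup (Fin n → ZMod 2) ℂ) :=
  Subgroup.closure
    {U : Matrix.unitaryGroup (Fin n → ZMod 2) ℂ |
      (U : Matrix (Fin n → ZMod 2) (Fin n → ZMod 2) ℂ) ∈ cliffordGens n}

/-- `α_+(ψ) = tr(P_{n,4}·(|ψ⟩⟨ψ|)^{⊗4})`. -/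
def alphaPlus (n : ℕ) (ψ : (Fin n → ZMod 2) → ℂ) : ℂ :=
  Matrix.trace (stabProj n 4 * tpow (rankOne ψ) 4)

/-!
Write `x_a = ⟨ψ|W_a|ψ⟩` and `y_a = ⟨φ|W_a|φ⟩`; these are real with `|x_a|, |y_a| ≤ 1`, and
`α_+(ψ) = d⁻² Σ_a x_a⁴` because the trace of a tensor power is the power of the trace.
The Pauli completeness relation `Σ_a W_a ⊗ W_a = d · SWAP` gives `Σ_a x_a y_a = d |⟨ψ, φ⟩|²`,
hence `Σ x_a² = Σ y_a² = d`, `Σ (x_a - y_a)² = 2d (1 - |⟨ψ, φ⟩|²) ≤ 2d ‖ψ - φ‖²` and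
`Σ (x_a + y_a)² ≤ 4d`. As `Σ (x_a² - y_a²) = 0`,
`Σ (x_a⁴ - y_a⁴) = Σ (x_a - y_a) · (x_a + y_a)(x_a² + y_a² - 1)` with `|x_a² + y_a² - 1| ≤ 1`,
so Cauchy–Schwarz bounds it by `√8 · d ‖ψ - φ‖`. Thus `α_+` is even `3/d`-Lipschitz, and
`ε` is a rescaling of `α_+`.
-/

open Matrix

def piKron {ι α R : Type*} [Fintype ι] [CommMonoid R] (A : ι → Matrix α α R) :
    Matrix (ι → α) (ι → α) R :=
  of fun x y => ∏ i, A i (x i) (y i)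

section piKron

variable {ι α R : Type*} [Fintype ι] [CommSemiring R]

lemma piKron_mul_piKron [Fintype α] [DecidableEq ι] (A B : ι → Matrix α α R) :
    piKron A * piKron B = piKron fun i => A i * B i := by
  ext x y
  simp only [piKron, mul_apply, of_apply, Fintype.prod_sum, Finset.prod_mul_distrib]

lemma trace_piKron [Fintype α] [DecidableEq ι] (A : ι → Matrix α α R) :
    trace (piKron A) = ∏ i, trace (A i) := by
  simp only [trace, diag, piKron, of_apply, Fintype.prod_sum]

lemma conjTranspose_piKron [StarRing R] (A : ι → Matrix α α R) :
    (piKron A)ᴴ = piKron fun i => (A i)ᴴ := by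
  ext x y
  simp [piKron, conjTranspose_apply]

lemma piKron_one [DecidableEq α] [DecidableEq ι] :
    piKron (fun _ : ι => (1 : Matrix α α R)) = 1 := by
  ext x y
  simp only [piKron, of_apply, one_apply, Fintype.prod_boole, funext_iff]

end piKron

lemma trace_tpow_mul_tpow {α : Type*} [Fintype α] (M N : Matrix α α ℂ) (k : ℕ) :
    trace (tpow M k * tpow N k) = trace (M * N) ^ k := by
  rw [show tpow M k = piKron fun _ => M from rfl, show tpow N k = piKron fun _ => N from rfl,
    piKron_mul_piKron, trace_piKron, Finset.prod_const, Finset.card_univ, Fintype.card_fin]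

lemma trace_mul_rankOne {α : Type*} [Fintype α] (M : Matrix α α ℂ) (ψ : α → ℂ) :
    trace (M * rankOne ψ) = star ψ ⬝ᵥ M *ᵥ ψ := by
  rw [show rankOne ψ = vecMulVec ψ (star ψ) from rfl, mul_vecMulVec, trace_vecMulVec,
    dotProduct_comm]

section Linear

variable {ι : Type*} [Fintype ι]

lemma norm_star_dotProduct_le (u v : ι → ℂ) :
    ‖star u ⬝ᵥ v‖ ≤ ‖WithLp.toLp 2 u‖ * ‖WithLp.toLp 2 v‖ := by
  simpa only [EuclideanSpace.inner_toLp_toLp, dotProduct_comm v] using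
    norm_inner_le_norm (𝕜 := ℂ) (WithLp.toLp 2 u) (WithLp.toLp 2 v)

lemma star_dotProduct_self (u : ι → ℂ) : star u ⬝ᵥ u = (‖WithLp.toLp 2 u‖ : ℂ) ^ 2 := by
  rw [← Complex.ofReal_pow, EuclideanSpace.norm_sq_eq, Complex.ofReal_sum]
  simp [dotProduct, Complex.conj_mul']

lemma norm_toLp_eq_one_of_star_dotProduct_self {u : ι → ℂ} (hu : star u ⬝ᵥ u = 1) :
    ‖WithLp.toLp 2 u‖ = 1 := by
  rw [star_dotProduct_self] at hu
  exact (pow_eq_one_iff_of_nonneg (norm_nonneg _) two_ne_zero).mp (by exact_mod_cast hu)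

lemma norm_toLp_mulVec_of_mem_unitaryGroup [DecidableEq ι] {M : Matrix ι ι ℂ}
    (hM : M ∈ unitaryGroup ι ℂ) (v : ι → ℂ) : ‖WithLp.toLp 2 (M *ᵥ v)‖ = ‖WithLp.toLp 2 v‖ := by
  have h : star (M *ᵥ v) ⬝ᵥ M *ᵥ v = star v ⬝ᵥ v := by
    rw [star_mulVec, ← dotProduct_mulVec, mulVec_mulVec, ← star_eq_conjTranspose,
      mem_unitaryGroup_iff'.mp hM, one_mulVec]
  rw [star_dotProduct_self, star_dotProduct_self] at h
  exact (pow_left_inj₀ (norm_nonneg _) (norm_nonneg _) two_ne_zero).mp (by exact_mod_cast h)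

lemma star_dotProduct_mulVec_eq_sum (M : Matrix ι ι ℂ) (ψ : ι → ℂ) :
    star ψ ⬝ᵥ M *ᵥ ψ = ∑ p : ι × ι, star (ψ p.1) * ψ p.2 * M p.1 p.2 := by
  simp only [dotProduct, mulVec, Finset.mul_sum, Fintype.sum_prod_type, Pi.star_apply]
  exact Finset.sum_congr rfl fun x _ => Finset.sum_congr rfl fun y _ => by ring

/-- `hW` says `∑ₐ Wₐ ⊗ Wₐ = N • SWAP`. -/
lemma sum_star_dotProduct_mulVec_mul_of_sum_apply_mul_apply [DecidableEq ι] {A : Type*}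
    [Fintype A] (W : A → Matrix ι ι ℂ) (N : ℂ)
    (hW : ∀ x y z w, ∑ a, W a x y * W a z w = if x = w ∧ y = z then N else 0)
    (ψ φ : ι → ℂ) :
    ∑ a, (star ψ ⬝ᵥ W a *ᵥ ψ) * (star φ ⬝ᵥ W a *ᵥ φ) = N * ((star ψ ⬝ᵥ φ) * (star φ ⬝ᵥ ψ)) := by
  simp only [star_dotProduct_mulVec_eq_sum, Finset.sum_mul_sum]
  rw [Finset.sum_comm]
  calc ∑ p : ι × ι, ∑ a, ∑ q : ι × ι,
        star (ψ p.1) * ψ p.2 * W a p.1 p.2 * (star (φ q.1) * φ q.2 * W a q.1 q.2)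
      = ∑ p : ι × ι, ∑ q : ι × ι,
          star (ψ p.1) * ψ p.2 * (star (φ q.1) * φ q.2) * ∑ a, W a p.1 p.2 * W a q.1 q.2 := by
        refine Finset.sum_congr rfl fun p _ => ?_
        rw [Finset.sum_comm]
        simp only [Finset.mul_sum]
        exact Finset.sum_congr rfl fun q _ => Finset.sum_congr rfl fun a _ => by ring
    _ = ∑ p : ι × ι, N * (star (ψ p.1) * ψ p.2 * (star (φ p.2) * φ p.1)) := by
        refine Finset.sum_congr rfl fun p _ => ?_
        simp only [hW, mul_ite, mul_zero]
        rw [Fintype.sum_prod_type]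
        simp [eq_comm, ite_and, mul_comm]
    _ = N * ((star ψ ⬝ᵥ φ) * (star φ ⬝ᵥ ψ)) := by
        rw [← Finset.mul_sum, Fintype.sum_prod_type]
        simp only [dotProduct, Finset.sum_mul_sum, Pi.star_apply]
        exact congrArg _ (Finset.sum_congr rfl fun x _ => Finset.sum_congr rfl fun y _ => by ring)

end Linear

lemma zmod_two_cases (z : ZMod 2) : z = 0 ∨ z = 1 := by
  revert z; decide

lemma one_add_one_zmod_two : (1 : ZMod 2) + 1 = 0 := rfl

lemma sum_zmod_two {M : Type*} [AddCommMonoid M] (f : ZMod 2 → M) : ∑ z, f z = f 0 + f 1 :=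
  Fin.sum_univ_two f

lemma pauli_isHermitian (c : ZMod 2 × ZMod 2) : (pauli c).IsHermitian := by
  obtain ⟨c₁, c₂⟩ := c
  ext i j
  rcases zmod_two_cases c₁ with rfl | rfl <;> rcases zmod_two_cases c₂ with rfl | rfl <;>
    rcases zmod_two_cases i with rfl | rfl <;> rcases zmod_two_cases j with rfl | rfl <;>
    simp [pauli, conjTranspose_apply, one_add_one_zmod_two]

lemma pauli_mul_self (c : ZMod 2 × ZMod 2) : pauli c * pauli c = 1 := by
  obtain ⟨c₁, c₂⟩ := c
  ext i j
  rcases zmod_two_cases c₁ with rfl | rfl <;> rcases zmod_two_cases c₂ with rfl | rfl <;>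
    rcases zmod_two_cases i with rfl | rfl <;> rcases zmod_two_cases j with rfl | rfl <;>
    simp [pauli, mul_apply, one_apply, one_add_one_zmod_two]

lemma sum_pauli_apply_mul_pauli_apply (p q r t : ZMod 2) :
    ∑ c, pauli c p q * pauli c r t = if p = t ∧ q = r then 2 else 0 := by
  rw [Fintype.sum_prod_type]
  simp only [sum_zmod_two]
  rcases zmod_two_cases p with rfl | rfl <;> rcases zmod_two_cases q with rfl | rfl <;>
    rcases zmod_two_cases r with rfl | rfl <;> rcases zmod_two_cases t with rfl | rfl <;>
    simp [pauli, one_add_one_zmod_two, (one_add_one_eq_two : (1 : ℂ) + 1 = 2)]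

section PauliW

variable {Q : Type*} [Fintype Q]

lemma pauliW_eq_piKron (a : Q → ZMod 2 × ZMod 2) : PauliW a = piKron fun i => pauli (a i) := rfl

lemma pauliW_isHermitian (a : Q → ZMod 2 × ZMod 2) : (PauliW a).IsHermitian := by
  rw [IsHermitian, pauliW_eq_piKron, conjTranspose_piKron]
  simp only [(pauli_isHermitian _).eq]

variable [DecidableEq Q]

lemma pauliW_mem_unitaryGroup (a : Q → ZMod 2 × ZMod 2) :
    PauliW a ∈ unitaryGroup (Q → ZMod 2) ℂ := by
  rw [mem_unitaryGroup_iff, star_eq_conjTranspose, (pauliW_isHermitian a).eq]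
  simp only [pauliW_eq_piKron, piKron_mul_piKron, pauli_mul_self, piKron_one]

lemma sum_pauliW_apply_mul_pauliW_apply (x y z w : Q → ZMod 2) :
    ∑ a, PauliW a x y * PauliW a z w = if x = w ∧ y = z then (2 : ℂ) ^ Fintype.card Q else 0 := by
  have h : ∀ a, PauliW a x y * PauliW a z w =
      ∏ i, pauli (a i) (x i) (y i) * pauli (a i) (z i) (w i) :=
    fun a => Finset.prod_mul_distrib.symm
  rw [Fintype.sum_congr _ _ h,
    ← Fintype.prod_sum fun i c => pauli c (x i) (y i) * pauli c (z i) (w i)]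
  simp only [sum_pauli_apply_mul_pauli_apply, Fintype.prod_ite_zero, Finset.prod_const,
    Finset.card_univ, funext_iff, forall_and]

/-- `⟨ψ|W_a|ψ⟩`, which is real since `W_a` is Hermitian (`ofReal_pauliExpectation`). -/
def pauliExpectation (ψ : (Q → ZMod 2) → ℂ) (a : Q → ZMod 2 × ZMod 2) : ℝ :=
  (star ψ ⬝ᵥ PauliW a *ᵥ ψ).re

lemma ofReal_pauliExpectation (ψ : (Q → ZMod 2) → ℂ) (a : Q → ZMod 2 × ZMod 2) :
    (pauliExpectation ψ a : ℂ) = star ψ ⬝ᵥ PauliW a *ᵥ ψ :=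
  Complex.ext rfl ((pauliW_isHermitian a).im_star_dotProduct_mulVec_self ψ).symm

lemma abs_pauliExpectation_le (ψ : (Q → ZMod 2) → ℂ) (a : Q → ZMod 2 × ZMod 2) :
    |pauliExpectation ψ a| ≤ ‖WithLp.toLp 2 ψ‖ ^ 2 := by
  calc |pauliExpectation ψ a| ≤ ‖star ψ ⬝ᵥ PauliW a *ᵥ ψ‖ := Complex.abs_re_le_norm _
    _ ≤ ‖WithLp.toLp 2 ψ‖ * ‖WithLp.toLp 2 (PauliW a *ᵥ ψ)‖ := norm_star_dotProduct_le _ _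
    _ = ‖WithLp.toLp 2 ψ‖ ^ 2 := by
      rw [norm_toLp_mulVec_of_mem_unitaryGroup (pauliW_mem_unitaryGroup a), sq]

lemma sum_pauliExpectation_mul (ψ φ : (Q → ZMod 2) → ℂ) :
    ∑ a, pauliExpectation ψ a * pauliExpectation φ a =
      2 ^ Fintype.card Q * ‖star ψ ⬝ᵥ φ‖ ^ 2 := by
  have h := sum_star_dotProduct_mulVec_mul_of_sum_apply_mul_apply PauliW _
    sum_pauliW_apply_mul_pauliW_apply ψ φ
  rw [star_dotProduct φ ψ, Complex.star_def, Complex.mul_conj'] at h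
  simp only [← ofReal_pauliExpectation] at h
  exact_mod_cast h

end PauliW

lemma alphaPlus_eq_sum_pauliExpectation_pow_four (n : ℕ) (ψ : (Fin n → ZMod 2) → ℂ) :
    alphaPlus n ψ = (((∑ a, pauliExpectation ψ a ^ 4) / 4 ^ n : ℝ) : ℂ) := by
  rw [alphaPlus, stabProj, smul_mul, trace_smul, Finset.sum_mul, trace_sum]
  simp only [trace_tpow_mul_tpow, trace_mul_rankOne, ← ofReal_pauliExpectation]
  push_cast
  rw [pow_mul, smul_eq_mul]
  ring

lemma sq_sum_pow_four_sub_pow_four_le {ι : Type*} [Fintype ι] (x y : ι → ℝ)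
    (hxy : ∑ a, x a ^ 2 = ∑ a, y a ^ 2) (hx : ∀ a, |x a| ≤ 1) (hy : ∀ a, |y a| ≤ 1) :
    (∑ a, (x a ^ 4 - y a ^ 4)) ^ 2 ≤ (∑ a, (x a - y a) ^ 2) * ∑ a, (x a + y a) ^ 2 := by
  have hsum : ∑ a, (x a ^ 4 - y a ^ 4) =
      ∑ a, (x a - y a) * ((x a + y a) * (x a ^ 2 + y a ^ 2 - 1)) := by
    have h : ∑ a, (x a - y a) * ((x a + y a) * (x a ^ 2 + y a ^ 2 - 1)) =
        ∑ a, (x a ^ 4 - y a ^ 4) - (∑ a, x a ^ 2 - ∑ a, y a ^ 2) := by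
      simp only [← Finset.sum_sub_distrib]
      exact Finset.sum_congr rfl fun a _ => by ring
    rw [h, hxy, sub_self, sub_zero]
  rw [hsum]
  refine (Finset.sum_mul_sq_le_sq_mul_sq _ _ _).trans
    (mul_le_mul_of_nonneg_left (Finset.sum_le_sum fun a _ => ?_) (by positivity))
  have hx2 : x a ^ 2 ≤ 1 := (sq_le_one_iff_abs_le_one _).mpr (hx a)
  have hy2 : y a ^ 2 ≤ 1 := (sq_le_one_iff_abs_le_one _).mpr (hy a)
  have h1 : (x a ^ 2 + y a ^ 2 - 1) ^ 2 ≤ 1 := by nlinarith [sq_nonneg (x a), sq_nonneg (y a)]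
  calc ((x a + y a) * (x a ^ 2 + y a ^ 2 - 1)) ^ 2
      = (x a + y a) ^ 2 * (x a ^ 2 + y a ^ 2 - 1) ^ 2 := mul_pow _ _ _
    _ ≤ (x a + y a) ^ 2 * 1 := by gcongr
    _ = (x a + y a) ^ 2 := mul_one _

section UnitVectors

variable {Q : Type*} [Fintype Q] [DecidableEq Q] {ψ φ : (Q → ZMod 2) → ℂ}

lemma sum_pauliExpectation_sq (hψ : ‖WithLp.toLp 2 ψ‖ = 1) :
    ∑ a, pauliExpectation ψ a ^ 2 = 2 ^ Fintype.card Q := by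
  simp only [sq, sum_pauliExpectation_mul, star_dotProduct_self, hψ]
  simp

lemma sum_sq_pauliExpectation_sub_le (hψ : ‖WithLp.toLp 2 ψ‖ = 1)
    (hφ : ‖WithLp.toLp 2 φ‖ = 1) :
    ∑ a, (pauliExpectation ψ a - pauliExpectation φ a) ^ 2 ≤
      2 * 2 ^ Fintype.card Q * ‖WithLp.toLp 2 ψ - WithLp.toLp 2 φ‖ ^ 2 := by
  set s : ℂ := star ψ ⬝ᵥ φ
  have hexpand : ∑ a, (pauliExpectation ψ a - pauliExpectation φ a) ^ 2 =
      2 * 2 ^ Fintype.card Q * (1 - ‖s‖ ^ 2) := by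
    have h : ∀ a, (pauliExpectation ψ a - pauliExpectation φ a) ^ 2 = pauliExpectation ψ a ^ 2
        + pauliExpectation φ a ^ 2 - 2 * (pauliExpectation ψ a * pauliExpectation φ a) :=
      fun a => by ring
    simp only [h, Finset.sum_sub_distrib, Finset.sum_add_distrib, ← Finset.mul_sum,
      sum_pauliExpectation_sq hψ, sum_pauliExpectation_sq hφ, sum_pauliExpectation_mul]
    ring
  have hdist : ‖WithLp.toLp 2 ψ - WithLp.toLp 2 φ‖ ^ 2 = 2 - 2 * s.re := by
    rw [norm_sub_sq (𝕜 := ℂ), hψ, hφ, EuclideanSpace.inner_toLp_toLp, dotProduct_comm,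
      RCLike.re_to_complex]
    ring
  rw [hexpand, hdist]
  have hre : s.re ≤ ‖s‖ := Complex.re_le_norm s
  have hd : 0 ≤ (2 : ℝ) ^ Fintype.card Q := by positivity
  nlinarith [sq_nonneg (‖s‖ - 1)]

lemma sum_sq_pauliExpectation_add_le (hψ : ‖WithLp.toLp 2 ψ‖ = 1)
    (hφ : ‖WithLp.toLp 2 φ‖ = 1) :
    ∑ a, (pauliExpectation ψ a + pauliExpectation φ a) ^ 2 ≤ 4 * 2 ^ Fintype.card Q := by
  calc ∑ a, (pauliExpectation ψ a + pauliExpectation φ a) ^ 2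
      ≤ ∑ a, (2 * pauliExpectation ψ a ^ 2 + 2 * pauliExpectation φ a ^ 2) :=
        Finset.sum_le_sum fun a _ => by
          nlinarith [sq_nonneg (pauliExpectation ψ a - pauliExpectation φ a)]
    _ = 4 * 2 ^ Fintype.card Q := by
        rw [Finset.sum_add_distrib, ← Finset.mul_sum, ← Finset.mul_sum,
          sum_pauliExpectation_sq hψ, sum_pauliExpectation_sq hφ]
        ring

lemma abs_sum_pauliExpectation_pow_four_sub_le (hψ : ‖WithLp.toLp 2 ψ‖ = 1)
    (hφ : ‖WithLp.toLp 2 φ‖ = 1) :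
    |∑ a, (pauliExpectation ψ a ^ 4 - pauliExpectation φ a ^ 4)| ≤
      3 * 2 ^ Fintype.card Q * ‖WithLp.toLp 2 ψ - WithLp.toLp 2 φ‖ := by
  have hψ1 : ∀ a, |pauliExpectation ψ a| ≤ 1 := fun a => by
    simpa [hψ] using abs_pauliExpectation_le ψ a
  have hφ1 : ∀ a, |pauliExpectation φ a| ≤ 1 := fun a => by
    simpa [hφ] using abs_pauliExpectation_le φ a
  refine abs_le_of_sq_le_sq ?_ (by positivity)
  calc (∑ a, (pauliExpectation ψ a ^ 4 - pauliExpectation φ a ^ 4)) ^ 2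
      ≤ (∑ a, (pauliExpectation ψ a - pauliExpectation φ a) ^ 2) *
          ∑ a, (pauliExpectation ψ a + pauliExpectation φ a) ^ 2 :=
        sq_sum_pow_four_sub_pow_four_le _ _
          (by rw [sum_pauliExpectation_sq hψ, sum_pauliExpectation_sq hφ]) hψ1 hφ1
    _ ≤ (2 * 2 ^ Fintype.card Q * ‖WithLp.toLp 2 ψ - WithLp.toLp 2 φ‖ ^ 2) *
          (4 * 2 ^ Fintype.card Q) :=
        mul_le_mul (sum_sq_pauliExpectation_sub_le hψ hφ)
          (sum_sq_pauliExpectation_add_le hψ hφ) (by positivity) (by positivity)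
    _ ≤ (3 * 2 ^ Fintype.card Q * ‖WithLp.toLp 2 ψ - WithLp.toLp 2 φ‖) ^ 2 := by
        nlinarith [sq_nonneg ((2 : ℝ) ^ Fintype.card Q * ‖WithLp.toLp 2 ψ - WithLp.toLp 2 φ‖)]

end UnitVectors

lemma norm_alphaPlus_sub_le {n : ℕ} {ψ φ : (Fin n → ZMod 2) → ℂ}
    (hψ : ‖WithLp.toLp 2 ψ‖ = 1) (hφ : ‖WithLp.toLp 2 φ‖ = 1) :
    ‖alphaPlus n ψ - alphaPlus n φ‖ ≤ 3 / 2 ^ n * ‖WithLp.toLp 2 ψ - WithLp.toLp 2 φ‖ := by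
  have h := abs_sum_pauliExpectation_pow_four_sub_le hψ hφ
  rw [Fintype.card_fin] at h
  rw [alphaPlus_eq_sum_pauliExpectation_pow_four, alphaPlus_eq_sum_pauliExpectation_pow_four,
    ← Complex.ofReal_sub, Complex.norm_real, Real.norm_eq_abs,
    ← sub_div, ← Finset.sum_sub_distrib, abs_div, abs_of_pos (by positivity : (0 : ℝ) < 4 ^ n),
    div_le_iff₀ (by positivity), show (4 : ℝ) ^ n = 2 ^ n * 2 ^ n by rw [← mul_pow]; norm_num]
  calc _ ≤ 3 * 2 ^ n * ‖WithLp.toLp 2 ψ - WithLp.toLp 2 φ‖ := h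
    _ = _ := by field_simp

lemma sqrt_sum_normSq_sub_eq_norm {ι : Type*} [Fintype ι] (u v : ι → ℂ) :
    √(∑ x, Complex.normSq (u x - v x)) = ‖WithLp.toLp 2 u - WithLp.toLp 2 v‖ := by
  rw [← WithLp.toLp_sub, EuclideanSpace.norm_eq]
  simp [Complex.normSq_eq_norm_sq]

theorem stmt14_general (n : ℕ) (ψ φ : (Fin n → ZMod 2) → ℂ)
    (hψ : ∑ x, (starRingEnd ℂ) (ψ x) * ψ x = 1)
    (hφ : ∑ x, (starRingEnd ℂ) (φ x) * φ x = 1) :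
    ‖alphaPlus n ψ - alphaPlus n φ‖ ≤
        5.4 / (2 : ℝ) ^ n * Real.sqrt (∑ x, Complex.normSq (ψ x - φ x)) ∧
      ‖(((2 : ℂ) ^ n * ((2 : ℂ) ^ n + 3) / 4) * alphaPlus n ψ - 1) -
            (((2 : ℂ) ^ n * ((2 : ℂ) ^ n + 3) / 4) * alphaPlus n φ - 1)‖ ≤
        5.4 * ((2 : ℝ) ^ n + 3) / 4 * Real.sqrt (∑ x, Complex.normSq (ψ x - φ x)) := by
  rw [sqrt_sum_normSq_sub_eq_norm]
  have hα : ‖alphaPlus n ψ - alphaPlus n φ‖ ≤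
      5.4 / 2 ^ n * ‖WithLp.toLp 2 ψ - WithLp.toLp 2 φ‖ :=
    (norm_alphaPlus_sub_le (norm_toLp_eq_one_of_star_dotProduct_self hψ)
      (norm_toLp_eq_one_of_star_dotProduct_self hφ)).trans (by gcongr; norm_num)
  refine ⟨hα, ?_⟩
  have hc : (2 : ℂ) ^ n * ((2 : ℂ) ^ n + 3) / 4 = ((2 ^ n * (2 ^ n + 3) / 4 : ℝ) : ℂ) := by
    push_cast; ring
  rw [sub_sub_sub_cancel_right, ← mul_sub, norm_mul, hc, Complex.norm_of_nonneg (by positivity)]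
  calc _ ≤ (2 : ℝ) ^ n * (2 ^ n + 3) / 4 * (5.4 / 2 ^ n * ‖WithLp.toLp 2 ψ - WithLp.toLp 2 φ‖) := by
        gcongr
    _ = _ := by field_simp

/-- On the unit sphere of `ℂ^d`, `d = 2^n`, the functions
`α_+(ψ) = tr(P_{n,4}(|ψ⟩⟨ψ|)^{⊗4})` and `ε(ψ) = (d(d+3)/4)·α_+(ψ) − 1` are Lipschitz
with constants `5.4/d` and `5.4(d+3)/4`, respectively. -/
theorem stmt14 (n : ℕ) (hn : 1 ≤ n) (ψ φ : (Fin n → ZMod 2) → ℂ)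
    (hψ : ∑ x, (starRingEnd ℂ) (ψ x) * ψ x = 1)
    (hφ : ∑ x, (starRingEnd ℂ) (φ x) * φ x = 1) :
    ‖alphaPlus n ψ - alphaPlus n φ‖ ≤
        5.4 / (2 : ℝ) ^ n * Real.sqrt (∑ x, Complex.normSq (ψ x - φ x)) ∧
      ‖(((2 : ℂ) ^ n * ((2 : ℂ) ^ n + 3) / 4) * alphaPlus n ψ - 1) -
            (((2 : ℂ) ^ n * ((2 : ℂ) ^ n + 3) / 4) * alphaPlus n φ - 1)‖ ≤
        5.4 * ((2 : ℝ) ^ n + 3) / 4 * Real.sqrt (∑ x, Complex.normSq (ψ x - φ x)) :=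
  stmt14_general n ψ φ hψ hφ

end
end

section
/- Let n ≥ 2, d = 2^n, and suppose a unit vector ψ ∈ ℂ^d is a fiducial vector of a 4-design of the n-qubit Clifford group, i.e. Σ_{a∈𝔽₂^{2n}} |⟨ψ, W_a ψ⟩|^4 = 4d/(d+3). Suppose further that ψ = ψ_1 ⊗ ψ_2 ⊗ ⋯ ⊗ ψ_m is a tensor product of m ≥ 2 unit vectors, where ψ_j ∈ ℂ^{2^{n_j}} with n_1 ≥ n_2 ≥ ⋯ ≥ n_m ≥ 1 and n_1 + ⋯ + n_m = n. Then m ≤ 3, except in the single case n = 4 with n_1 = n_2 = n_3 = n_4 = 1; and if m = 3, then n_2 = n_3 = 1, except when (n_1, n_2, n_3) = (2,2,1) or (n_1, n_2, n_3) = (3,2,1). -/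
open scoped BigOperators

noncomputable section

/-!
A unit vector `φ` on `k` qubits satisfies `Σ_a |⟨φ, W_a φ⟩|² = 2^k` (the Pauli operators are an
orthogonal basis of the matrices), and the `a = 0` term equals `1`. Cauchy–Schwarz over the
other `4^k - 1` terms gives `Σ_a |⟨φ, W_a φ⟩|⁴ ≥ 2·2^k / (2^k + 1)`. The ℓ₄ quantity is
multiplicative over tensor factors, so a product fiducial forces
`2^m (2^n + 3) ≤ 4 ∏_j (2^{n_j} + 1)`. Each factor `(2^{n_j} + 1) / 2^{n_j}` is at most `3/2`,
and at most `5/4` once `n_j ≥ 2`, which leaves only the listed shapes.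
-/

open Matrix

lemma two_mul_div_le_sum_sq {ι : Type*} [Fintype ι] (g : ι → ℝ) (i₀ : ι) (D : ℕ)
    (hcard : Fintype.card ι = D ^ 2) (hsum : ∑ i, g i = D) (hi₀ : g i₀ = 1) :
    2 * D / (D + 1) ≤ ∑ i, g i ^ 2 := by
  classical
  set s := Finset.univ.erase i₀
  have hD : (1 : ℝ) ≤ D := by
    have : 0 < D ^ 2 := hcard ▸ Fintype.card_pos_iff.mpr ⟨i₀⟩
    exact_mod_cast Nat.pos_of_ne_zero (by rintro rfl; simp at this)
  have hs_card : (s.card : ℝ) = D ^ 2 - 1 := by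
    rw [Finset.card_erase_of_mem (Finset.mem_univ _), Finset.card_univ, hcard,
      Nat.cast_sub (Nat.one_le_pow _ _ (by exact_mod_cast hD))]
    push_cast; ring
  have hs_sum : ∑ i ∈ s, g i = D - 1 := by
    rw [← Finset.add_sum_erase _ _ (Finset.mem_univ i₀), hi₀] at hsum
    linarith
  have hcs := sq_sum_le_card_mul_sum_sq (s := s) (f := g)
  rw [hs_sum, hs_card] at hcs
  have hkey : (D : ℝ) - 1 ≤ (D + 1) * ∑ i ∈ s, g i ^ 2 := by
    rcases hD.eq_or_lt with h | h
    · rw [← h, sub_self]; positivity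
    · exact le_of_mul_le_mul_left (by nlinarith) (sub_pos.mpr h)
  rw [← Finset.add_sum_erase _ _ (Finset.mem_univ i₀), hi₀, div_le_iff₀ (by positivity)]
  linarith

section Pauli

lemma pauli_sum_mul_conj (x y x' y' : ZMod 2) :
    ∑ a, pauli a x y * starRingEnd ℂ (pauli a x' y') = if x = x' ∧ y = y' then 2 else 0 := by
  have huniv : (Finset.univ : Finset (ZMod 2 × ZMod 2)) = {(0, 0), (0, 1), (1, 0), (1, 1)} := by
    decide
  have hcases : ∀ z : ZMod 2, z = 0 ∨ z = 1 := by decide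
  rw [huniv]
  obtain rfl | rfl := hcases x <;> obtain rfl | rfl := hcases y <;>
    obtain rfl | rfl := hcases x' <;> obtain rfl | rfl := hcases y' <;>
    simp +decide [pauli, Finset.sum_insert, one_add_one_eq_two]

variable {Q : Type*} [Fintype Q]

lemma PauliW_zero : PauliW (0 : Q → ZMod 2 × ZMod 2) = 1 := by
  ext x y
  simp only [PauliW, pauli, of_apply, Pi.zero_apply, Prod.mk_zero_zero, if_true, one_apply]
  split_ifs with h
  · simp [h]
  · obtain ⟨i, hi⟩ := Function.ne_iff.mp h
    exact Finset.prod_eq_zero (Finset.mem_univ i) (if_neg hi)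

variable [DecidableEq Q]

lemma PauliW_sum_mul_conj (x y x' y' : Q → ZMod 2) :
    ∑ a, PauliW a x y * starRingEnd ℂ (PauliW a x' y')
      = if x = x' ∧ y = y' then (2 : ℂ) ^ Fintype.card Q else 0 := by
  simp only [PauliW, of_apply, map_prod, ← Finset.prod_mul_distrib]
  rw [← Fintype.prod_sum fun i b => pauli b (x i) (y i) * starRingEnd ℂ (pauli b (x' i) (y' i))]
  simp only [pauli_sum_mul_conj, funext_iff, ← forall_and]
  split_ifs with h
  · simp [h]
  · obtain ⟨i, hi⟩ := not_forall.mp h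
    exact Finset.prod_eq_zero (Finset.mem_univ i) (if_neg hi)

def pauliExpect (ψ : (Q → ZMod 2) → ℂ) (a : Q → ZMod 2 × ZMod 2) : ℂ :=
  ∑ x, starRingEnd ℂ (ψ x) * (PauliW a *ᵥ ψ) x

def pauliMoment4 (ψ : (Q → ZMod 2) → ℂ) : ℝ :=
  ∑ a, ‖pauliExpect ψ a‖ ^ 4

lemma pauliExpect_zero (ψ : (Q → ZMod 2) → ℂ) :
    pauliExpect ψ 0 = ∑ x, starRingEnd ℂ (ψ x) * ψ x := by
  simp [pauliExpect, PauliW_zero]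

lemma pauliExpect_eq_sum_sum (ψ : (Q → ZMod 2) → ℂ) (a : Q → ZMod 2 × ZMod 2) :
    pauliExpect ψ a = ∑ x, ∑ y, starRingEnd ℂ (ψ x) * PauliW a x y * ψ y := by
  simp only [pauliExpect, mulVec, dotProduct, Finset.mul_sum, mul_assoc]

lemma sum_pauliExpect_mul_conj (ψ : (Q → ZMod 2) → ℂ) :
    ∑ a, pauliExpect ψ a * starRingEnd ℂ (pauliExpect ψ a)
      = 2 ^ Fintype.card Q * (∑ x, starRingEnd ℂ (ψ x) * ψ x) ^ 2 := by
  set c : (Q → ZMod 2) × (Q → ZMod 2) → ℂ := fun p => starRingEnd ℂ (ψ p.1) * ψ p.2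
  have hexpand : ∀ a, pauliExpect ψ a * starRingEnd ℂ (pauliExpect ψ a)
      = ∑ p, ∑ q, c p * starRingEnd ℂ (c q) *
          (PauliW a p.1 p.2 * starRingEnd ℂ (PauliW a q.1 q.2)) := by
    intro a
    rw [pauliExpect_eq_sum_sum, ← Fintype.sum_prod_type', map_sum, Finset.sum_mul_sum]
    exact Finset.sum_congr rfl fun p _ => Finset.sum_congr rfl fun q _ => by
      simp only [c, map_mul]; ring
  calc ∑ a, pauliExpect ψ a * starRingEnd ℂ (pauliExpect ψ a)
      = ∑ p, ∑ q, c p * starRingEnd ℂ (c q) *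
          ∑ a, PauliW a p.1 p.2 * starRingEnd ℂ (PauliW a q.1 q.2) := by
        simp only [hexpand, Finset.mul_sum]
        rw [Finset.sum_comm]
        exact Finset.sum_congr rfl fun p _ => Finset.sum_comm
    _ = 2 ^ Fintype.card Q * ∑ p, c p * starRingEnd ℂ (c p) := by
        simp only [PauliW_sum_mul_conj, ← Prod.ext_iff, mul_ite, mul_zero, Finset.sum_ite_eq,
          Finset.mem_univ, if_true, Finset.mul_sum]
        exact Finset.sum_congr rfl fun p _ => by ring
    _ = 2 ^ Fintype.card Q * (∑ x, starRingEnd ℂ (ψ x) * ψ x) ^ 2 := by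
        simp only [c, sq, Finset.sum_mul_sum, Fintype.sum_prod_type, map_mul, Complex.conj_conj]
        congr 1
        exact Finset.sum_congr rfl fun x _ => Finset.sum_congr rfl fun y _ => by ring

lemma sum_normSq_pauliExpect {ψ : (Q → ZMod 2) → ℂ}
    (hψ : ∑ x, starRingEnd ℂ (ψ x) * ψ x = 1) :
    ∑ a, Complex.normSq (pauliExpect ψ a) = 2 ^ Fintype.card Q := by
  have h := sum_pauliExpect_mul_conj ψ
  simp only [Complex.mul_conj, hψ, one_pow, mul_one] at h
  exact_mod_cast h

lemma pauliMoment4_ge {ψ : (Q → ZMod 2) → ℂ} (hψ : ∑ x, starRingEnd ℂ (ψ x) * ψ x = 1) :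
    2 * (2 : ℝ) ^ Fintype.card Q / (2 ^ Fintype.card Q + 1) ≤ pauliMoment4 ψ := by
  have h := two_mul_div_le_sum_sq (fun a => Complex.normSq (pauliExpect ψ a)) 0
    (2 ^ Fintype.card Q) (by simp [← pow_mul, pow_mul'])
    (by exact_mod_cast sum_normSq_pauliExpect hψ) (by simp [pauliExpect_zero, hψ])
  push_cast at h
  refine h.trans_eq (Finset.sum_congr rfl fun a _ => ?_)
  rw [← Complex.sq_norm, ← pow_mul]

end Pauli

lemma sum_prod_sigma_curry {ι : Type*} [Fintype ι] [DecidableEq ι] {κ : ι → Type*}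
    [∀ i, Fintype (κ i)] [∀ i, DecidableEq (κ i)] {X : Type*} [Fintype X]
    {R : Type*} [CommSemiring R] (f : (i : ι) → (κ i → X) → R) :
    ∑ a : (Σ i, κ i) → X, ∏ i, f i (fun k => a ⟨i, k⟩) = ∏ i, ∑ b : κ i → X, f i b := by
  rw [Finset.prod_univ_sum, Fintype.piFinset_univ]
  exact Equiv.sum_comp (Equiv.piCurry fun i (_ : κ i) => X) fun b => ∏ i, f i (b i)

section Tensor

variable {ι : Type*} [Fintype ι] {κ : ι → Type*} [∀ i, Fintype (κ i)]

lemma PauliW_sigma (a : (Σ i, κ i) → ZMod 2 × ZMod 2) (x y : (Σ i, κ i) → ZMod 2) :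
    PauliW a x y = ∏ i, PauliW (fun k => a ⟨i, k⟩) (fun k => x ⟨i, k⟩) (fun k => y ⟨i, k⟩) := by
  simp only [PauliW, of_apply]
  rw [← Finset.univ_sigma_univ, Finset.prod_sigma]

variable [DecidableEq ι] [∀ i, DecidableEq (κ i)]

lemma pauliExpect_sigma {ψ : ((Σ i, κ i) → ZMod 2) → ℂ} {φ : (i : ι) → (κ i → ZMod 2) → ℂ}
    (hψ : ∀ x, ψ x = ∏ i, φ i (fun k => x ⟨i, k⟩)) (a : (Σ i, κ i) → ZMod 2 × ZMod 2) :
    pauliExpect ψ a = ∏ i, pauliExpect (φ i) (fun k => a ⟨i, k⟩) := by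
  set E : (i : ι) → (κ i → ZMod 2) → (κ i → ZMod 2) → ℂ := fun i c b =>
    starRingEnd ℂ (φ i c) * PauliW (fun k => a ⟨i, k⟩) c b * φ i b
  calc pauliExpect ψ a
      = ∑ x : (Σ i, κ i) → ZMod 2, ∑ y : (Σ i, κ i) → ZMod 2,
          ∏ i, E i (fun k => x ⟨i, k⟩) (fun k => y ⟨i, k⟩) := by
        simp only [E, pauliExpect_eq_sum_sum, hψ, PauliW_sigma, map_prod,
          ← Finset.prod_mul_distrib]
    _ = ∑ x : (Σ i, κ i) → ZMod 2, ∏ i, ∑ b, E i (fun k => x ⟨i, k⟩) b :=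
        Finset.sum_congr rfl fun x _ => sum_prod_sigma_curry fun i => E i (fun k => x ⟨i, k⟩)
    _ = ∏ i, ∑ c, ∑ b, E i c b := sum_prod_sigma_curry fun i c => ∑ b, E i c b
    _ = ∏ i, pauliExpect (φ i) (fun k => a ⟨i, k⟩) := by simp only [E, pauliExpect_eq_sum_sum]

lemma pauliMoment4_sigma {ψ : ((Σ i, κ i) → ZMod 2) → ℂ} {φ : (i : ι) → (κ i → ZMod 2) → ℂ}
    (hψ : ∀ x, ψ x = ∏ i, φ i (fun k => x ⟨i, k⟩)) :
    pauliMoment4 ψ = ∏ i, pauliMoment4 (φ i) := by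
  simp only [pauliMoment4, pauliExpect_sigma hψ, norm_prod, ← Finset.prod_pow]
  exact sum_prod_sigma_curry fun i b => ‖pauliExpect (φ i) b‖ ^ 4

end Tensor

lemma two_pow_card_mul_le_of_prod_le {ι : Type*} [Fintype ι] (d : ι → ℝ) (hd : ∀ i, 0 < d i)
    (h : ∏ i, 2 * d i / (d i + 1) ≤ 4 * (∏ i, d i) / ((∏ i, d i) + 3)) :
    2 ^ Fintype.card ι * ((∏ i, d i) + 3) ≤ 4 * ∏ i, (d i + 1) := by
  have hD : 0 < ∏ i, d i := Finset.prod_pos fun i _ => hd i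
  rw [Finset.prod_div_distrib, Finset.prod_mul_distrib, Finset.prod_const, Finset.card_univ,
    div_le_div_iff₀ (Finset.prod_pos fun i _ => by linarith [hd i]) (by positivity)] at h
  exact le_of_mul_le_mul_left (by linarith) hD

lemma four_mul_three_pow_le_four_pow {m : ℕ} (hm : 5 ≤ m) : 4 * 3 ^ m ≤ 4 ^ m := by
  induction m, hm using Nat.le_induction with
  | base => norm_num
  | succ m _ ih => rw [pow_succ, pow_succ]; omega

lemma card_le_four_of_two_pow_card_mul_le {ι : Type*} [Fintype ι] (d : ι → ℕ)
    (hd : ∀ i, 2 ≤ d i) (h : 2 ^ Fintype.card ι * (∏ i, d i + 3) ≤ 4 * ∏ i, (d i + 1)) :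
    Fintype.card ι ≤ 4 := by
  set m := Fintype.card ι
  have hfactor : 2 ^ m * ∏ i, (d i + 1) ≤ 3 ^ m * ∏ i, d i := by
    simp only [m, ← Finset.card_univ, ← Finset.prod_const, ← Finset.prod_mul_distrib]
    exact Finset.prod_le_prod' fun i _ => by linarith [hd i]
  have hD : 0 < ∏ i, d i := Finset.prod_pos fun i _ => by linarith [hd i]
  have hlt : 4 ^ m * ∏ i, d i < 4 * 3 ^ m * ∏ i, d i := by
    calc 4 ^ m * ∏ i, d i < 2 ^ m * (2 ^ m * (∏ i, d i + 3)) := by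
          rw [← mul_assoc, ← mul_pow]; norm_num
      _ ≤ 2 ^ m * (4 * ∏ i, (d i + 1)) := Nat.mul_le_mul_left _ h
      _ ≤ 4 * 3 ^ m * ∏ i, d i := by linarith
  by_contra! hm
  linarith [Nat.mul_le_mul_right (∏ i, d i) (four_mul_three_pow_le_four_pow hm)]

lemma exponents_of_three_factors {p q r : ℕ} (hr : 1 ≤ r) (hrq : r ≤ q) (hqp : q ≤ p)
    (h : 2 ^ 3 * (2 ^ (p + q + r) + 3) ≤ 4 * ((2 ^ p + 1) * (2 ^ q + 1) * (2 ^ r + 1))) :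
    q = 1 ∧ r = 1 ∨ p = 2 ∧ q = 2 ∧ r = 1 ∨ p = 3 ∧ q = 2 ∧ r = 1 := by
  have hba : 2 ^ q ≤ 2 ^ p := Nat.pow_le_pow_right two_pos hqp
  have hcb : 2 ^ r ≤ 2 ^ q := Nat.pow_le_pow_right two_pos hrq
  rw [pow_add, pow_add] at h
  obtain rfl : r = 1 := by
    by_contra hr1
    have hc : 4 ≤ 2 ^ r := by simpa using Nat.pow_le_pow_right two_pos (by omega : 2 ≤ r)
    generalize 2 ^ p = a, 2 ^ q = b, 2 ^ r = c at *
    have key := Nat.mul_le_mul (Nat.mul_le_mul (show 4 * (a + 1) ≤ 5 * a by omega)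
      (show 4 * (b + 1) ≤ 5 * b by omega)) (show 4 * (c + 1) ≤ 5 * c by omega)
    nlinarith
  rcases (by omega : q = 1 ∨ q = 2 ∨ 3 ≤ q) with rfl | rfl | hq
  · exact Or.inl ⟨rfl, rfl⟩
  · have ha : 2 ^ p ≤ 9 := by norm_num at h; omega
    have hp : p < 4 := (Nat.pow_lt_pow_iff_right (by norm_num)).mp (by omega : 2 ^ p < 2 ^ 4)
    omega
  · have hb : 8 ≤ 2 ^ q := by simpa using Nat.pow_le_pow_right two_pos hq
    norm_num at h
    nlinarith

lemma exponents_of_four_factors {p q r s : ℕ} (hs : 1 ≤ s) (hsr : s ≤ r) (hrq : r ≤ q)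
    (hqp : q ≤ p)
    (h : 2 ^ 4 * (2 ^ (p + q + r + s) + 3)
      ≤ 4 * ((2 ^ p + 1) * (2 ^ q + 1) * (2 ^ r + 1) * (2 ^ s + 1))) :
    p = 1 := by
  by_contra hp
  have ha : 4 ≤ 2 ^ p := by simpa using Nat.pow_le_pow_right two_pos (by omega : 2 ≤ p)
  rw [pow_add, pow_add, pow_add] at h
  rcases (by omega : q = 1 ∨ 2 ≤ q) with rfl | hq
  · obtain rfl : r = 1 := by omega
    obtain rfl : s = 1 := by omega
    norm_num at h
    omega
  · have hb : 4 ≤ 2 ^ q := by simpa using Nat.pow_le_pow_right two_pos hq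
    have hc : 2 ≤ 2 ^ r := Nat.one_lt_two_pow (by omega)
    have he : 2 ≤ 2 ^ s := Nat.one_lt_two_pow (by omega)
    generalize 2 ^ p = a, 2 ^ q = b, 2 ^ r = c, 2 ^ s = e at *
    have key := Nat.mul_le_mul
      (Nat.mul_le_mul (show 4 * (a + 1) ≤ 5 * a by omega) (show 4 * (b + 1) ≤ 5 * b by omega))
      (Nat.mul_le_mul (show 2 * (c + 1) ≤ 3 * c by omega) (show 2 * (e + 1) ≤ 3 * e by omega))
    nlinarith [Nat.zero_le (a * b * c * e)]

/-- If a unit vector `ψ ∈ ℂ^{2^n}` (`n ≥ 2`) is a 4-design fiducial, i.e.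
`Σ_a |⟨ψ, W_a ψ⟩|⁴ = 4d/(d+3)` with `d = 2^n`, and `ψ = ψ_1 ⊗ ⋯ ⊗ ψ_m` is a tensor product
of `m ≥ 2` unit vectors `ψ_j ∈ ℂ^{2^{n_j}}` with `n_1 ≥ ⋯ ≥ n_m ≥ 1` and `Σ n_j = n`, then
`m ≤ 3` except in the single case `n = 4`, `n_1 = n_2 = n_3 = n_4 = 1`; and if `m = 3` then
`n_2 = n_3 = 1` except when `(n_1,n_2,n_3) = (2,2,1)` or `(3,2,1)`. -/
theorem stmt17 (n m : ℕ)
    (nv : Fin m → ℕ) (hpos : ∀ j, 1 ≤ nv j)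
    (hmono : ∀ j k : Fin m, j ≤ k → nv k ≤ nv j)
    (hsum : ∑ j, nv j = n)
    (ψv : (j : Fin m) → (Fin (nv j) → ZMod 2) → ℂ)
    (hunit : ∀ j, ∑ x, (starRingEnd ℂ) (ψv j x) * ψv j x = 1)
    (ψ : (((j : Fin m) × Fin (nv j)) → ZMod 2) → ℂ)
    (hψ : ∀ x, ψ x = ∏ j, ψv j (fun i => x ⟨j, i⟩))
    (hfid : ∑ a : ((j : Fin m) × Fin (nv j)) → ZMod 2 × ZMod 2,
        ‖∑ x, (starRingEnd ℂ) (ψ x) * Matrix.mulVec (PauliW a) ψ x‖ ^ 4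
      = 4 * (2 : ℝ) ^ n / ((2 : ℝ) ^ n + 3)) :
    (m ≤ 3 ∨ (n = 4 ∧ m = 4 ∧ ∀ j, nv j = 1)) ∧
      ∀ hm3 : m = 3,
        (nv ⟨1, by omega⟩ = 1 ∧ nv ⟨2, by omega⟩ = 1) ∨
          (nv ⟨0, by omega⟩ = 2 ∧ nv ⟨1, by omega⟩ = 2 ∧ nv ⟨2, by omega⟩ = 1) ∨
          (nv ⟨0, by omega⟩ = 3 ∧ nv ⟨1, by omega⟩ = 2 ∧ nv ⟨2, by omega⟩ = 1) := by
  subst hsum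
  have hbound : ∏ j, 2 * (2 : ℝ) ^ nv j / (2 ^ nv j + 1)
      ≤ 4 * 2 ^ (∑ j, nv j) / (2 ^ (∑ j, nv j) + 3) := by
    have hmoment : pauliMoment4 ψ = _ := hfid
    rw [← hmoment, pauliMoment4_sigma hψ]
    refine Finset.prod_le_prod (fun j _ => by positivity) fun j _ => ?_
    simpa using pauliMoment4_ge (hunit j)
  have hineq : 2 ^ m * (2 ^ (∑ j, nv j) + 3) ≤ 4 * ∏ j, (2 ^ nv j + 1) := by
    have h := two_pow_card_mul_le_of_prod_le (fun j => (2 : ℝ) ^ nv j) (fun j => by positivity)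
      (by rwa [Finset.prod_pow_eq_pow_sum])
    rw [Finset.prod_pow_eq_pow_sum, Fintype.card_fin] at h
    exact_mod_cast h
  have hm4 : m ≤ 4 := by
    simpa using card_le_four_of_two_pow_card_mul_le (fun j => 2 ^ nv j)
      (fun j => Nat.one_lt_two_pow (Nat.one_le_iff_ne_zero.mp (hpos j)))
      (by rwa [Finset.prod_pow_eq_pow_sum, Fintype.card_fin])
  obtain hm | rfl | rfl : m ≤ 2 ∨ m = 3 ∨ m = 4 := by omega
  · exact ⟨Or.inl (by omega), fun _ => by omega⟩
  · rw [Fin.sum_univ_three, Fin.prod_univ_three] at hineq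
    exact ⟨Or.inl le_rfl, fun _ => exponents_of_three_factors (hpos 2)
      (hmono 1 2 (by decide)) (hmono 0 1 (by decide)) hineq⟩
  · rw [Fin.sum_univ_four, Fin.prod_univ_four] at hineq
    have h0 := exponents_of_four_factors (hpos 3) (hmono 2 3 (by decide))
      (hmono 1 2 (by decide)) (hmono 0 1 (by decide)) hineq
    have hall : ∀ j, nv j = 1 := fun j => le_antisymm (h0 ▸ hmono 0 j (Fin.zero_le j)) (hpos j)
    exact ⟨Or.inr ⟨by simp [hall], rfl, hall⟩, fun h => by omega⟩

end
end
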